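/- If p and q are minimal idempotents of a semigroup with completely simple kernel and the product p·q is not idempotent, then there exists a minimal idempotent p' such that p'·(p·q)·p' ≠ p', i.e., the little structure group Γ_{p'} is nontrivial. -/
import Mathlib


/-- A two-sided ideal of a semigroup. -/
def IsIdeal {S : Type*} [Semigroup S] (I : Set S) : Prop :=
  I.Nonempty ∧ ∀ s : S, ∀ x ∈ I, s * x ∈ I ∧ x * s ∈ I

/-- A two-sided ideal of the sub-semigroup `K`. -/
def IsIdealIn {S : Type*} [Semigroup S] (K I : Set S) : Prop :=
  I ⊆ K ∧ I.Nonempty ∧ ∀ s ∈ K, ∀ x ∈ I, s * x ∈ I ∧ x * s ∈ I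

/-- `K` is completely simple: simple with a primitive idempotent. -/
def IsCompletelySimpleSet {S : Type*} [Semigroup S] (K : Set S) : Prop :=
  K.Nonempty ∧ (∀ I : Set S, IsIdealIn K I → I = K) ∧
    ∃ e ∈ K, e * e = e ∧ ∀ f ∈ K, f * f = f → (f * e = f ∧ e * f = f) → f = e

/-- If `p`, `q` are minimal idempotents (idempotents in the completely simple kernel)
and `p·q` is not idempotent, then there is a minimal idempotent `p'` with
`p'·(p·q)·p' ≠ p'`, i.e. the little structure group `Γ_{p'}` is nontrivial. -/
theorem stmt8 {E : Type*} [Semigroup E] (K : Set E)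
    (hK : IsIdeal K) (hsmall : ∀ J : Set E, IsIdeal J → K ⊆ J)
    (hcs : IsCompletelySimpleSet K)
    (p q : E) (hpK : p ∈ K) (hqK : q ∈ K) (hp : p * p = p) (hq : q * q = q)
    (hpq : (p * q) * (p * q) ≠ p * q) :
    ∃ p' ∈ K, p' * p' = p' ∧ p' * (p * q) * p' ≠ p' := by
  refine ⟨p, hpK, hp, fun h => hpq ?_⟩
  have h1 : (p * q) * p = p := by
    calc (p * q) * p = p * (p * q) * p := by rw [← mul_assoc p p q, hp]
      _ = p := h
  calc (p * q) * (p * q) = ((p * q) * p) * q := by simp only [mul_assoc]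
    _ = p * q := by rw [h1]
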